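/- arXiv:1805.08008 — 2 statements merged into one kernel-verified Lean document; each statement's English description precedes it below -/
import Mathlib

section
/- If β = (β_1,…,β_N) and β' = (β'_1,…,β'_N) are segment-length vectors with all components positive and β is a componentwise integer multiple of β' (i.e., β_n = d_n·β'_n for some positive integers d_n for every n), then the optimal time-slotted social welfare satisfies W̃*(β) ≤ W̃*(β'). -/
open MeasureTheory

/-- A downloaded video segment: owner `u`, bitrate level `z`, and download
start/end times `ts`, `te`.  Its bitrate is `R u z` (so the model constraint
`r = R_u^z` holds by construction) and its data volume is `R u z * β u`. -/
structure Seg (N Z : ℕ) where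
  u : Fin N
  z : Fin Z
  ts : ℝ
  te : ℝ

namespace Crowd

variable {N Z : ℕ}

/-- Well-formedness of the model parameters: horizon `T > 0`; positive integrable
cellular capacities `h`; `{0,1}`-valued encounter indicators `e` with `e n n ≡ 1`;
positive buffer sizes `Q`; positive strictly increasing bitrates `R n 1 < … < R n Z`;
nondecreasing value functions `g` on `(0,∞)`; positive loss coefficients
`φqdeg, φrebuf`; nonnegative energy coefficients `ctime, cdata, wdata`. -/
def Valid (T : ℝ) (h : Fin N → ℝ → ℝ) (e : Fin N → Fin N → ℝ → ℝ)
    (Q : Fin N → ℝ) (R : Fin N → Fin Z → ℝ) (g : Fin N → ℝ → ℝ)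
    (φqdeg φrebuf ctime cdata wdata : Fin N → ℝ) : Prop :=
  0 < T ∧
  (∀ n, IntegrableOn (h n) (Set.Icc 0 T)) ∧
  (∀ n, ∀ t ∈ Set.Icc (0 : ℝ) T, 0 < h n t) ∧
  (∀ n m t, e n m t = 0 ∨ e n m t = 1) ∧
  (∀ n t, e n n t = 1) ∧
  (∀ n, 0 < Q n) ∧
  (∀ n, StrictMono (R n)) ∧ (∀ n z, 0 < R n z) ∧
  (∀ n, MonotoneOn (g n) (Set.Ioi 0)) ∧
  (∀ n, 0 < φqdeg n) ∧ (∀ n, 0 < φrebuf n) ∧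
  (∀ n, 0 ≤ ctime n) ∧ (∀ n, 0 ≤ cdata n) ∧ (∀ n, 0 ≤ wdata n)

/-! ### The virtual time-slotted crowdsourced streaming system -/

/-- Amount of data (in Mbit) user `n` downloads for user `m` in slot `τ`:
`x_{n,m}(τ) = Σ_z κ_{n,m}^z(τ)·β_m·R_m^z`. -/
noncomputable def xdat (R : Fin N → Fin Z → ℝ) (β : Fin N → ℝ)
    (κ : Fin N → Fin N → Fin Z → ℕ → ℕ) (n m : Fin N) (τ : ℕ) : ℝ :=
  ∑ z : Fin Z, (κ n m z τ : ℝ) * β m * R m z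

/-- Total data user `n` downloads in slot `τ`: `x^dl_n(τ) = Σ_m x_{n,m}(τ)`. -/
noncomputable def xdl (R : Fin N → Fin Z → ℝ) (β : Fin N → ℝ)
    (κ : Fin N → Fin N → Fin Z → ℕ → ℕ) (n : Fin N) (τ : ℕ) : ℝ :=
  ∑ m : Fin N, xdat R β κ n m τ

/-- Aggregate cellular capacity of user `n` in slot `τ` (the interval `[τ-1, τ]`). -/
noncomputable def Hcap (h : Fin N → ℝ → ℝ) (n : Fin N) (τ : ℕ) : ℝ :=
  ∫ t in ((τ : ℝ) - 1)..(τ : ℝ), h n t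

/-- Total playback time user `m` receives in slot `τ`:
`y^re_m(τ) = Σ_n Σ_z κ_{n,m}^z(τ)·β_m`. -/
noncomputable def yre (β : Fin N → ℝ) (κ : Fin N → Fin N → Fin Z → ℕ → ℕ)
    (m : Fin N) (τ : ℕ) : ℝ :=
  ∑ n : Fin N, ∑ z : Fin Z, (κ n m z τ : ℝ) * β m

/-- Buffer level of user `m` at the end of slot `τ`:
`q_m(0) = 0`, `q_m(τ) = max (q_m(τ-1) - 1) 0 + y^re_m(τ)`. -/
noncomputable def qslot (β : Fin N → ℝ) (κ : Fin N → Fin N → Fin Z → ℕ → ℕ)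
    (m : Fin N) : ℕ → ℝ
  | 0 => 0
  | τ + 1 => max (qslot β κ m τ - 1) 0 + yre β κ m (τ + 1)

/-- Feasibility of a time-slotted downloading vector profile `κ`
(constraints C̃.2, C̃.3, and C̃.4). -/
def FeasibleSlot (T : ℕ) (h : Fin N → ℝ → ℝ) (e : Fin N → Fin N → ℝ → ℝ)
    (Q : Fin N → ℝ) (R : Fin N → Fin Z → ℝ) (β : Fin N → ℝ)
    (κ : Fin N → Fin N → Fin Z → ℕ → ℕ) : Prop :=
  -- C̃.2: slot capacity
  (∀ n, ∀ τ ∈ Finset.Icc 1 T, xdl R β κ n τ ≤ Hcap h n τ) ∧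
  -- C̃.3: encounter constraint
  (∀ n m, m ≠ n → ∀ τ ∈ Finset.Icc 1 T, 0 < xdat R β κ n m τ →
    ∀ t ∈ Set.Icc ((τ : ℝ) - 1) (τ : ℝ), e n m t = 1) ∧
  -- C̃.4: buffer constraint
  (∀ m, ∀ τ ∈ Finset.Icc 1 T, 0 ≤ qslot β κ m τ ∧ qslot β κ m τ ≤ Q m)

/-- The (finite) set of bitrates that user `n` receives in slot `τ`. -/
noncomputable def Bset (R : Fin N → Fin Z → ℝ) (κ : Fin N → Fin N → Fin Z → ℕ → ℕ)
    (n : Fin N) (τ : ℕ) : Finset ℝ :=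
  (Finset.univ.filter fun p : Fin N × Fin Z => 0 < κ p.1 n p.2 τ).image fun p => R n p.2

/-- Payoff of user `n` in the time-slotted system: value from video quality, minus
quality-degradation loss (between the highest bitrate `r^H_n(τ-1)` of the previous slot
and the lowest bitrate `r^L_n(τ)` of the current slot, whenever both slots deliver
segments to `n`; within a slot the received segments are sorted in ascending bitrate,
so no degradation occurs inside a slot), minus rebuffering loss, minus cellular
downloading energy, minus WiFi exchange energy. -/
noncomputable def slotPayoff (T : ℕ) (h : Fin N → ℝ → ℝ) (R : Fin N → Fin Z → ℝ)
    (g : Fin N → ℝ → ℝ) (φqdeg φrebuf ctime cdata wdata : Fin N → ℝ) (β : Fin N → ℝ)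
    (κ : Fin N → Fin N → Fin Z → ℕ → ℕ) (n : Fin N) : ℝ :=
  (∑ τ ∈ Finset.Icc 1 T, ∑ m : Fin N, ∑ z : Fin Z, (κ m n z τ : ℝ) * β n * g n (R n z))
  - (∑ τ ∈ Finset.Icc 2 T,
      if hp : (Bset R κ n (τ - 1)).Nonempty ∧ (Bset R κ n τ).Nonempty then
        φqdeg n * max ((Bset R κ n (τ - 1)).max' hp.1 - (Bset R κ n τ).min' hp.2) 0
      else 0)
  - (∑ τ ∈ Finset.Icc 2 T, φrebuf n * max (1 - qslot β κ n (τ - 1)) 0)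
  - (∑ τ ∈ Finset.Icc 1 T,
      (ctime n * (xdl R β κ n τ / Hcap h n τ) + cdata n * xdl R β κ n τ))
  - (∑ τ ∈ Finset.Icc 1 T, ∑ m ∈ Finset.univ.erase n, wdata n * xdat R β κ n m τ)

/-- Social welfare of the time-slotted system. -/
noncomputable def slotWelfare (T : ℕ) (h : Fin N → ℝ → ℝ) (R : Fin N → Fin Z → ℝ)
    (g : Fin N → ℝ → ℝ) (φqdeg φrebuf ctime cdata wdata : Fin N → ℝ) (β : Fin N → ℝ)
    (κ : Fin N → Fin N → Fin Z → ℕ → ℕ) : ℝ :=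
  ∑ n : Fin N, slotPayoff T h R g φqdeg φrebuf ctime cdata wdata β κ n

/-- `W̃*(β)`: the optimal social welfare of the (virtual) time-slotted system. -/
noncomputable def slotSWstar (T : ℕ) (h : Fin N → ℝ → ℝ) (e : Fin N → Fin N → ℝ → ℝ)
    (Q : Fin N → ℝ) (R : Fin N → Fin Z → ℝ) (g : Fin N → ℝ → ℝ)
    (φqdeg φrebuf ctime cdata wdata : Fin N → ℝ) (β : Fin N → ℝ) : ℝ :=
  sSup {W : ℝ | ∃ κ : Fin N → Fin N → Fin Z → ℕ → ℕ,
    FeasibleSlot T h e Q R β κ ∧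
    W = slotWelfare T h R g φqdeg φrebuf ctime cdata wdata β κ}
/-!
Splitting every segment of user `m` into `d m` segments of length `β' m`, received in the same
slot from the same sender, turns a feasible profile for `β` into one for `β'` with the same data
volumes, playback times, buffer levels and sets of received bitrates, hence with the same
welfare. So the feasible welfares for `β` form a subset of those for `β'`. The latter set is
bounded above, since a segment's playback time is at most its sender's slot capacity divided by
its bitrate, and the former is nonempty, since the zero profile is feasible.
-/

section Rescaling

variable (R : Fin N → Fin Z → ℝ) {β β' : Fin N → ℝ} (d : Fin N → ℕ)
  (κ : Fin N → Fin N → Fin Z → ℕ → ℕ)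

def splitProfile : Fin N → Fin N → Fin Z → ℕ → ℕ :=
  fun n m z τ => d m * κ n m z τ

variable {d}

lemma cast_splitProfile_mul (hd : ∀ m, β m = d m * β' m) (n m : Fin N) (z : Fin Z) (τ : ℕ) :
    (splitProfile d κ n m z τ : ℝ) * β' m = κ n m z τ * β m := by
  simp only [splitProfile, Nat.cast_mul, hd m]
  ring

lemma xdat_splitProfile (hd : ∀ m, β m = d m * β' m) (n m : Fin N) (τ : ℕ) :
    xdat R β' (splitProfile d κ) n m τ = xdat R β κ n m τ := by
  simp only [xdat, cast_splitProfile_mul κ hd]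

lemma xdl_splitProfile (hd : ∀ m, β m = d m * β' m) (n : Fin N) (τ : ℕ) :
    xdl R β' (splitProfile d κ) n τ = xdl R β κ n τ := by
  simp only [xdl, xdat_splitProfile R κ hd]

lemma yre_splitProfile (hd : ∀ m, β m = d m * β' m) (m : Fin N) (τ : ℕ) :
    yre β' (splitProfile d κ) m τ = yre β κ m τ := by
  simp only [yre, cast_splitProfile_mul κ hd]

lemma qslot_splitProfile (hd : ∀ m, β m = d m * β' m) (m : Fin N) (τ : ℕ) :
    qslot β' (splitProfile d κ) m τ = qslot β κ m τ := by
  induction τ with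
  | zero => rfl
  | succ τ ih => simp only [qslot, ih, yre_splitProfile κ hd]

lemma feasibleSlot_splitProfile {T : ℕ} {h : Fin N → ℝ → ℝ} {e : Fin N → Fin N → ℝ → ℝ}
    {Q : Fin N → ℝ} (hd : ∀ m, β m = d m * β' m) (hκ : FeasibleSlot T h e Q R β κ) :
    FeasibleSlot T h e Q R β' (splitProfile d κ) := by
  simpa only [FeasibleSlot, xdl_splitProfile R κ hd, xdat_splitProfile R κ hd,
    qslot_splitProfile κ hd] using hκ

lemma Bset_splitProfile (hd_pos : ∀ m, 0 < d m) (n : Fin N) (τ : ℕ) :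
    Bset R (splitProfile d κ) n τ = Bset R κ n τ := by
  simp only [Bset, splitProfile, Nat.mul_pos_iff_of_pos_left (hd_pos n)]

lemma slotWelfare_splitProfile (hd : ∀ m, β m = d m * β' m) (hd_pos : ∀ m, 0 < d m) (T : ℕ)
    (h : Fin N → ℝ → ℝ) (g : Fin N → ℝ → ℝ) (φqdeg φrebuf ctime cdata wdata : Fin N → ℝ) :
    slotWelfare T h R g φqdeg φrebuf ctime cdata wdata β' (splitProfile d κ) =
      slotWelfare T h R g φqdeg φrebuf ctime cdata wdata β κ := by
  simp only [slotWelfare, slotPayoff, cast_splitProfile_mul κ hd, Bset_splitProfile R κ hd_pos,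
    qslot_splitProfile κ hd, xdl_splitProfile R κ hd, xdat_splitProfile R κ hd]

end Rescaling

section Bounds

variable {T : ℕ} {h : Fin N → ℝ → ℝ} {e : Fin N → Fin N → ℝ → ℝ} {Q : Fin N → ℝ}
  {R : Fin N → Fin Z → ℝ} {β : Fin N → ℝ} (κ : Fin N → Fin N → Fin Z → ℕ → ℕ)

lemma Hcap_nonneg {n : Fin N} (hh : ∀ t ∈ Set.Icc (0 : ℝ) T, 0 ≤ h n t) {τ : ℕ}
    (hτ : τ ∈ Finset.Icc 1 T) : 0 ≤ Hcap h n τ := by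
  obtain ⟨h1, h2⟩ := Finset.mem_Icc.mp hτ
  have h1' : (1 : ℝ) ≤ τ := by exact_mod_cast h1
  have h2' : (τ : ℝ) ≤ T := by exact_mod_cast h2
  exact intervalIntegral.integral_nonneg (by linarith) fun t ht =>
    hh t ⟨by linarith [ht.1], ht.2.trans h2'⟩

lemma xdat_nonneg (hR : ∀ n z, 0 ≤ R n z) (hβ : ∀ n, 0 ≤ β n) (n m : Fin N) (τ : ℕ) :
    0 ≤ xdat R β κ n m τ :=
  Finset.sum_nonneg fun z _ => mul_nonneg (mul_nonneg (Nat.cast_nonneg _) (hβ m)) (hR m z)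

lemma xdl_nonneg (hR : ∀ n z, 0 ≤ R n z) (hβ : ∀ n, 0 ≤ β n) (n : Fin N) (τ : ℕ) :
    0 ≤ xdl R β κ n τ :=
  Finset.sum_nonneg fun m _ => xdat_nonneg κ hR hβ n m τ

lemma segment_data_le_Hcap (hR : ∀ n z, 0 ≤ R n z) (hβ : ∀ n, 0 ≤ β n)
    (hκ : FeasibleSlot T h e Q R β κ) {τ : ℕ} (hτ : τ ∈ Finset.Icc 1 T) (n m : Fin N)
    (z : Fin Z) : (κ n m z τ : ℝ) * β m * R m z ≤ Hcap h n τ :=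
  calc (κ n m z τ : ℝ) * β m * R m z ≤ xdat R β κ n m τ :=
        Finset.single_le_sum (f := fun z => (κ n m z τ : ℝ) * β m * R m z)
          (fun z _ => mul_nonneg (mul_nonneg (Nat.cast_nonneg _) (hβ m)) (hR m z))
          (Finset.mem_univ z)
    _ ≤ xdl R β κ n τ :=
        Finset.single_le_sum (fun m _ => xdat_nonneg κ hR hβ n m τ) (Finset.mem_univ m)
    _ ≤ Hcap h n τ := hκ.1 n τ hτ

lemma feasibleSlot_zero (hh : ∀ n, ∀ t ∈ Set.Icc (0 : ℝ) T, 0 ≤ h n t) (hQ : ∀ n, 0 ≤ Q n) :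
    FeasibleSlot T h e Q R β 0 := by
  have hq : ∀ m τ, qslot β (0 : Fin N → Fin N → Fin Z → ℕ → ℕ) m τ = 0 := fun m τ => by
    induction τ with
    | zero => rfl
    | succ τ ih => rw [qslot, ih]; simp [yre]
  refine ⟨fun n τ hτ => ?_, fun n m _ τ _ hpos => ?_, fun m τ _ => ?_⟩
  · simpa [xdl, xdat] using Hcap_nonneg (hh n) hτ
  · simp [xdat] at hpos
  · simp [hq, hQ m]

variable {g : Fin N → ℝ → ℝ} {φqdeg φrebuf ctime cdata wdata : Fin N → ℝ}

lemma slotPayoff_le_value (hvalid : Valid (T : ℝ) h e Q R g φqdeg φrebuf ctime cdata wdata)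
    (hβ : ∀ n, 0 ≤ β n) (n : Fin N) :
    slotPayoff T h R g φqdeg φrebuf ctime cdata wdata β κ n ≤
      ∑ τ ∈ Finset.Icc 1 T, ∑ m : Fin N, ∑ z : Fin Z, (κ m n z τ : ℝ) * β n * g n (R n z) := by
  obtain ⟨-, -, hh, -, -, -, -, hR, -, hqdeg, hrebuf, hctime, hcdata, hwdata⟩ := hvalid
  have hR' : ∀ n z, 0 ≤ R n z := fun n z => (hR n z).le
  refine (sub_le_self _ ?_).trans <| (sub_le_self _ ?_).trans <| (sub_le_self _ ?_).trans <|
    sub_le_self _ ?_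
  · exact Finset.sum_nonneg fun τ _ => Finset.sum_nonneg fun m _ =>
      mul_nonneg (hwdata n) (xdat_nonneg κ hR' hβ n m τ)
  · exact Finset.sum_nonneg fun τ hτ => add_nonneg
      (mul_nonneg (hctime n) (div_nonneg (xdl_nonneg κ hR' hβ n τ)
        (Hcap_nonneg (fun t ht => (hh n t ht).le) hτ)))
      (mul_nonneg (hcdata n) (xdl_nonneg κ hR' hβ n τ))
  · exact Finset.sum_nonneg fun τ _ => mul_nonneg (hrebuf n).le (le_max_right _ _)
  · refine Finset.sum_nonneg fun τ _ => ?_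
    split_ifs
    exacts [mul_nonneg (hqdeg n).le (le_max_right _ _), le_rfl]

lemma slotWelfare_le (hvalid : Valid (T : ℝ) h e Q R g φqdeg φrebuf ctime cdata wdata)
    (hβ : ∀ n, 0 ≤ β n) (hκ : FeasibleSlot T h e Q R β κ) :
    slotWelfare T h R g φqdeg φrebuf ctime cdata wdata β κ ≤
      ∑ n : Fin N, ∑ τ ∈ Finset.Icc 1 T, ∑ m : Fin N, ∑ z : Fin Z,
        Hcap h m τ / R n z * max (g n (R n z)) 0 := by
  have ⟨_, _, _, _, _, _, _, hR, _⟩ := hvalid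
  refine Finset.sum_le_sum fun n _ => (slotPayoff_le_value κ hvalid hβ n).trans ?_
  refine Finset.sum_le_sum fun τ hτ => Finset.sum_le_sum fun m _ =>
    Finset.sum_le_sum fun z _ => ?_
  have hplay : (κ m n z τ : ℝ) * β n ≤ Hcap h m τ / R n z :=
    (le_div_iff₀ (hR n z)).mpr
      (segment_data_le_Hcap κ (fun n z => (hR n z).le) hβ hκ hτ m n z)
  calc (κ m n z τ : ℝ) * β n * g n (R n z)
      ≤ (κ m n z τ : ℝ) * β n * max (g n (R n z)) 0 :=
        mul_le_mul_of_nonneg_left (le_max_left _ _) (mul_nonneg (Nat.cast_nonneg _) (hβ n))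
    _ ≤ Hcap h m τ / R n z * max (g n (R n z)) 0 :=
        mul_le_mul_of_nonneg_right hplay (le_max_right _ _)

lemma bddAbove_feasible_slotWelfare
    (hvalid : Valid (T : ℝ) h e Q R g φqdeg φrebuf ctime cdata wdata) (hβ : ∀ n, 0 ≤ β n) :
    BddAbove {W : ℝ | ∃ κ : Fin N → Fin N → Fin Z → ℕ → ℕ,
      FeasibleSlot T h e Q R β κ ∧ W = slotWelfare T h R g φqdeg φrebuf ctime cdata wdata β κ} :=
  ⟨_, by rintro _ ⟨κ, hκ, rfl⟩; exact slotWelfare_le κ hvalid hβ hκ⟩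

end Bounds

theorem slotSWstar_mono_of_integer_multiple_general
    (N Z T : ℕ)
    (h : Fin N → ℝ → ℝ) (e : Fin N → Fin N → ℝ → ℝ) (Q : Fin N → ℝ)
    (R : Fin N → Fin Z → ℝ) (g : Fin N → ℝ → ℝ)
    (φqdeg φrebuf ctime cdata wdata : Fin N → ℝ) (β β' : Fin N → ℝ)
    (hvalid : Valid (T : ℝ) h e Q R g φqdeg φrebuf ctime cdata wdata)
    (hβ' : ∀ n, 0 < β' n)
    (hmult : ∀ n, ∃ d : ℕ, 0 < d ∧ β n = (d : ℝ) * β' n) :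
    slotSWstar T h e Q R g φqdeg φrebuf ctime cdata wdata β
      ≤ slotSWstar T h e Q R g φqdeg φrebuf ctime cdata wdata β' := by
  choose d hd_pos hd using hmult
  have ⟨_, _, hh, _, _, hQ, _⟩ := hvalid
  have hzero : FeasibleSlot T h e Q R β 0 :=
    feasibleSlot_zero (fun n t ht => (hh n t ht).le) fun n => (hQ n).le
  refine csSup_le_csSup (bddAbove_feasible_slotWelfare hvalid fun n => (hβ' n).le)
    ⟨_, 0, hzero, rfl⟩ ?_
  rintro _ ⟨κ, hκ, rfl⟩
  exact ⟨splitProfile d κ, feasibleSlot_splitProfile R κ hd hκ,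
    (slotWelfare_splitProfile R κ hd hd_pos T h g φqdeg φrebuf ctime cdata wdata).symm⟩

/-- **Proposition 1 (time-slotted part).** If the segment-length vector `β` is a
componentwise integer multiple of `β'` (both with positive components), then the
optimal time-slotted social welfare satisfies `W̃*(β) ≤ W̃*(β')`. -/
theorem slotSWstar_mono_of_integer_multiple
    (N Z T : ℕ) (hT : 1 ≤ T)
    (h : Fin N → ℝ → ℝ) (e : Fin N → Fin N → ℝ → ℝ) (Q : Fin N → ℝ)
    (R : Fin N → Fin Z → ℝ) (g : Fin N → ℝ → ℝ)
    (φqdeg φrebuf ctime cdata wdata : Fin N → ℝ) (β β' : Fin N → ℝ)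
    (hvalid : Valid (T : ℝ) h e Q R g φqdeg φrebuf ctime cdata wdata)
    (hβ : ∀ n, 0 < β n) (hβ' : ∀ n, 0 < β' n)
    (hmult : ∀ n, ∃ d : ℕ, 0 < d ∧ β n = (d : ℝ) * β' n) :
    slotSWstar T h e Q R g φqdeg φrebuf ctime cdata wdata β
      ≤ slotSWstar T h e Q R g φqdeg φrebuf ctime cdata wdata β' :=
  slotSWstar_mono_of_integer_multiple_general N Z T h e Q R g φqdeg φrebuf ctime cdata wdata β β'
    hvalid hβ' hmult

end Crowd
end

section
/- Monotonicity of total rebuffering in inter-arrival gaps: let β ≥ 0, let Δ_1, …, Δ_K ≥ 0 and Δ'_1, …, Δ'_K ≥ 0 satisfy Δ'_k ≤ Δ_k for every k, let q'_0 ≥ q_0 ≥ 0, and define q_k = max(q_{k−1} − Δ_k, 0) + β and q'_k = max(q'_{k−1} − Δ'_k, 0) + β for k = 1, …, K. Then max(Δ'_k − q'_{k−1}, 0) ≤ max(Δ_k − q_{k−1}, 0) for every k, and consequently Σ_{k=1}^{K} max(Δ'_k − q'_{k−1}, 0) ≤ Σ_{k=1}^{K} max(Δ_k − q_{k−1}, 0).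 -/
/-! The buffer update `q ↦ max (q - Δ) 0 + β` is monotone in `q` and antitone in `Δ`, so by
induction on `k` the buffer `q'` fed by the shorter gaps stays above `q` at every step.
A fuller buffer facing a shorter gap then freezes for no longer. -/

section BufferUpdate

variable {α : Type*} [AddCommGroup α] [LinearOrder α] [IsOrderedAddMonoid α]

def bufferUpdate (β Δ q : α) : α := max (q - Δ) 0 + β

theorem bufferUpdate_mono {β Δ Δ' q q' : α} (hΔ : Δ' ≤ Δ) (hq : q ≤ q') :
    bufferUpdate β Δ q ≤ bufferUpdate β Δ' q' :=
  add_le_add_left (max_le_max_right 0 (sub_le_sub hq hΔ)) β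

theorem buffer_le_of_gap_le {K : ℕ} {β : α} {Δ Δ' q q' : ℕ → α}
    (hΔ : ∀ k, 1 ≤ k → k ≤ K → Δ' k ≤ Δ k) (h0 : q 0 ≤ q' 0)
    (hrec : ∀ k, 1 ≤ k → k ≤ K → q k = bufferUpdate β (Δ k) (q (k - 1)))
    (hrec' : ∀ k, 1 ≤ k → k ≤ K → q' k = bufferUpdate β (Δ' k) (q' (k - 1))) :
    ∀ k ≤ K, q k ≤ q' k := by
  intro k
  induction k with
  | zero => exact fun _ => h0
  | succ n ih =>
    intro hn
    rw [hrec (n + 1) n.succ_pos hn, hrec' (n + 1) n.succ_pos hn, Nat.add_sub_cancel]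
    exact bufferUpdate_mono (hΔ (n + 1) n.succ_pos hn) (ih (Nat.le_of_succ_le hn))

end BufferUpdate

theorem rebuffering_monotone_general
    (K : ℕ) (β : ℝ) (Δ Δ' : ℕ → ℝ) (q q' : ℕ → ℝ)
    (hΔle : ∀ k, 1 ≤ k → k ≤ K → Δ' k ≤ Δ k)
    (hq0' : q 0 ≤ q' 0)
    (hrec : ∀ k, 1 ≤ k → k ≤ K → q k = max (q (k - 1) - Δ k) 0 + β)
    (hrec' : ∀ k, 1 ≤ k → k ≤ K → q' k = max (q' (k - 1) - Δ' k) 0 + β) :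
    (∀ k, 1 ≤ k → k ≤ K → max (Δ' k - q' (k - 1)) 0 ≤ max (Δ k - q (k - 1)) 0) ∧
    ∑ k ∈ Finset.Icc 1 K, max (Δ' k - q' (k - 1)) 0
      ≤ ∑ k ∈ Finset.Icc 1 K, max (Δ k - q (k - 1)) 0 := by
  have hbuffer := buffer_le_of_gap_le (β := β) hΔle hq0' hrec hrec'
  have hstep : ∀ k, 1 ≤ k → k ≤ K → max (Δ' k - q' (k - 1)) 0 ≤ max (Δ k - q (k - 1)) 0 :=
    fun k hk hkK => max_le_max_right 0 (sub_le_sub (hΔle k hk hkK) (hbuffer (k - 1) (by omega)))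
  refine ⟨hstep, Finset.sum_le_sum fun k hk => ?_⟩
  obtain ⟨hk, hkK⟩ := Finset.mem_Icc.mp hk
  exact hstep k hk hkK

/-- **Monotonicity of total rebuffering in inter-arrival gaps.**
If the gaps `Δ'` are pointwise no larger than the gaps `Δ` and the initial buffer level
`q' 0` is at least `q 0`, then under the buffer recursion
`q k = max (q (k-1) - Δ k) 0 + β` each per-step rebuffering time satisfies
`max(Δ'_k - q'_{k-1}, 0) ≤ max(Δ_k - q_{k-1}, 0)`, and consequently
`Σ_{k=1}^{K} max(Δ'_k - q'_{k-1}, 0) ≤ Σ_{k=1}^{K} max(Δ_k - q_{k-1}, 0)`. -/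
theorem rebuffering_monotone
    (K : ℕ) (β : ℝ) (hβ : 0 ≤ β) (Δ Δ' : ℕ → ℝ) (q q' : ℕ → ℝ)
    (hΔ : ∀ k, 1 ≤ k → k ≤ K → 0 ≤ Δ k)
    (hΔ' : ∀ k, 1 ≤ k → k ≤ K → 0 ≤ Δ' k)
    (hΔle : ∀ k, 1 ≤ k → k ≤ K → Δ' k ≤ Δ k)
    (hq0 : 0 ≤ q 0) (hq0' : q 0 ≤ q' 0)
    (hrec : ∀ k, 1 ≤ k → k ≤ K → q k = max (q (k - 1) - Δ k) 0 + β)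
    (hrec' : ∀ k, 1 ≤ k → k ≤ K → q' k = max (q' (k - 1) - Δ' k) 0 + β) :
    (∀ k, 1 ≤ k → k ≤ K → max (Δ' k - q' (k - 1)) 0 ≤ max (Δ k - q (k - 1)) 0) ∧
    ∑ k ∈ Finset.Icc 1 K, max (Δ' k - q' (k - 1)) 0
      ≤ ∑ k ∈ Finset.Icc 1 K, max (Δ k - q (k - 1)) 0 :=
  rebuffering_monotone_general K β Δ Δ' q q' hΔle hq0' hrec hrec'
end
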